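/- The symplectic representation Φ of Diff(S¹) is injective: if ψ₁ and ψ₂ are orientation-preserving C^∞ diffeomorphisms of S¹ with lifts φ₁, φ₂ of their inverses, and ψ₁.u = ψ₂.u as functions for every u ∈ H, then ψ₁ = ψ₂ as maps of the circle, i.e. φ₁(θ) ≡ φ₂(θ) (mod 2π) for all θ ∈ ℝ. -/

import Mathlib

open MeasureTheory

/-- Membership in `H`: `2π`-periodic complex-valued `C^∞` function with mean zero. -/
def MemH (u : ℝ → ℂ) : Prop :=
  ContDiff ℝ (⊤ : ℕ∞) u ∧ Function.Periodic u (2 * Real.pi) ∧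
    (1 / (2 * Real.pi) : ℂ) * ∫ θ in (0:ℝ)..(2 * Real.pi), u θ = 0

/-- The action of a diffeomorphism `ψ` of `S¹` on `u ∈ H`, expressed through the lift `φ` of
`ψ⁻¹`: `(ψ.u)(θ) = u(φ(θ)) − (1/2π)∫₀^{2π} u(φ(t)) dt`. -/
noncomputable def diffAct (φ : ℝ → ℝ) (u : ℝ → ℂ) : ℝ → ℂ := fun θ =>
  u (φ θ) - (1 / (2 * Real.pi) : ℂ) * ∫ t in (0:ℝ)..(2 * Real.pi), u (φ t)

/-!
Testing the hypothesis on `e^{iθ}` and `e^{2iθ}` shows that `E₁ - E₂` and `E₁² - E₂²` are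
constant, where `Eⱼ = e^{iφⱼ}`. If `E₁ - E₂` were a nonzero constant, dividing would make
`E₁ + E₂`, hence `E₁`, constant; but `φ₁` increases by `2π` over a period, so it passes through
`φ₁(0) + π`, where `E₁` takes the value `-E₁(0)`. Hence `E₁ = E₂`, i.e. `φ₁ ≡ φ₂ mod 2π`.
-/

open Complex
open scoped Real

lemma memH_exp_mul_I_pow {n : ℕ} (hn : n ≠ 0) : MemH fun θ : ℝ => exp (θ * I) ^ n := by
  have hpow : ∀ θ : ℝ, exp (θ * I) ^ n = exp (n * I * θ) := fun θ => by
    rw [← Complex.exp_nat_mul]; ring_nf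
  refine ⟨?_, fun θ => ?_, ?_⟩
  · exact ((contDiff_exp.comp (ofRealCLM.contDiff.mul contDiff_const)).pow n)
  · simp only [ofReal_add, add_mul, Complex.exp_add, ofReal_mul, ofReal_ofNat, exp_two_pi_mul_I,
      mul_one]
  · have hc : (n : ℂ) * I ≠ 0 := mul_ne_zero (Nat.cast_ne_zero.mpr hn) I_ne_zero
    simp_rw [hpow]
    rw [integral_exp_mul_complex hc,
      show (n : ℂ) * I * ↑(2 * π) = n * (2 * π * I) by push_cast; ring, exp_nat_mul_two_pi_mul_I]
    simp

lemma sub_comp_const_of_diffAct_eq {φ₁ φ₂ : ℝ → ℝ} {u : ℝ → ℂ} (h : diffAct φ₁ u = diffAct φ₂ u)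
    (θ θ' : ℝ) : u (φ₁ θ) - u (φ₂ θ) = u (φ₁ θ') - u (φ₂ θ') := by
  have hθ := congrFun h θ
  have hθ' := congrFun h θ'
  simp only [diffAct] at hθ hθ'
  linear_combination hθ - hθ'

lemma eq_of_sub_const_of_sq_sub_const {α K : Type*} [Field K] [NeZero (2 : K)] {f g : α → K}
    (h₁ : ∀ x y, f x - g x = f y - g y) (h₂ : ∀ x y, f x ^ 2 - g x ^ 2 = f y ^ 2 - g y ^ 2)
    (hf : ∃ x y, f x ≠ f y) (x : α) : f x = g x := by
  by_contra hx
  obtain ⟨y, z, hyz⟩ := hf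
  have hsum : ∀ y, f y + g y = f x + g x := fun y => by
    have hc : f y - g y ≠ 0 := by rw [h₁ y x]; exact sub_ne_zero.mpr hx
    refine mul_right_cancel₀ hc ?_
    linear_combination h₂ y x - (f x + g x) * h₁ y x
  refine hyz (mul_left_cancel₀ (two_ne_zero (α := K)) ?_)
  linear_combination h₁ y z + hsum y - hsum z

lemma exists_exp_mul_I_ne {φ : ℝ → ℝ} (hφ : Continuous φ) {a b : ℝ} (hab : a ≤ b)
    (hπ : φ a + π ≤ φ b) : ∃ θ θ', exp (φ θ * I) ≠ exp (φ θ' * I) := by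
  obtain ⟨θ, -, hθ⟩ := intermediate_value_Icc hab hφ.continuousOn
    ⟨by linarith [Real.pi_pos], hπ⟩
  refine ⟨θ, a, fun he => exp_ne_zero (φ a * I) ?_⟩
  rw [hθ, ofReal_add, add_mul, exp_add_pi_mul_I] at he
  linear_combination -he / 2

theorem representation_injective_general (φ₁ φ₂ : ℝ → ℝ)
    (hφ₁ : ContDiff ℝ (⊤ : ℕ∞) φ₁)
    (hlift₁ : ∀ θ, φ₁ (θ + 2 * Real.pi) = φ₁ θ + 2 * Real.pi)
    (h : ∀ u : ℝ → ℂ, MemH u → diffAct φ₁ u = diffAct φ₂ u) :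
    ∀ θ : ℝ, ∃ k : ℤ, φ₁ θ - φ₂ θ = 2 * Real.pi * k := by
  have h₁ := sub_comp_const_of_diffAct_eq (h _ (memH_exp_mul_I_pow one_ne_zero))
  have h₂ := sub_comp_const_of_diffAct_eq (h _ (memH_exp_mul_I_pow two_ne_zero))
  simp only [pow_one] at h₁
  have hne := exists_exp_mul_I_ne hφ₁.continuous (by positivity : (0 : ℝ) ≤ 0 + 2 * π)
    (by linarith [hlift₁ 0, Real.pi_pos])
  have hE := eq_of_sub_const_of_sq_sub_const h₁ h₂ hne
  intro θ
  obtain ⟨m, hm⟩ := Circle.exp_eq_exp.1 (Circle.ext (by simpa using hE θ))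
  exact ⟨m, by rw [hm]; ring⟩

/-- The symplectic representation `Φ` of `Diff(S¹)` is injective: if the actions of `ψ₁` and
`ψ₂` agree on every `u ∈ H`, then the lifts `φ₁, φ₂` of `ψ₁⁻¹, ψ₂⁻¹` agree modulo `2π`,
i.e. `ψ₁ = ψ₂` as maps of the circle. -/
theorem representation_injective (φ₁ φ₂ : ℝ → ℝ)
    (hφ₁ : ContDiff ℝ (⊤ : ℕ∞) φ₁) (hφ₁' : ∀ θ, 0 < deriv φ₁ θ)
    (hlift₁ : ∀ θ, φ₁ (θ + 2 * Real.pi) = φ₁ θ + 2 * Real.pi)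
    (hφ₂ : ContDiff ℝ (⊤ : ℕ∞) φ₂) (hφ₂' : ∀ θ, 0 < deriv φ₂ θ)
    (hlift₂ : ∀ θ, φ₂ (θ + 2 * Real.pi) = φ₂ θ + 2 * Real.pi)
    (h : ∀ u : ℝ → ℂ, MemH u → diffAct φ₁ u = diffAct φ₂ u) :
    ∀ θ : ℝ, ∃ k : ℤ, φ₁ θ - φ₂ θ = 2 * Real.pi * k :=
  representation_injective_general φ₁ φ₂ hφ₁ hlift₁ h
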